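/- arXiv:2601.19683 — 3 statements merged into one kernel-verified Lean document; each statement's English description precedes it below -/
import Mathlib

section
/- Let f: ℝ → ℝ be continuous at t₀ but not differentiable at t₀, and let g: ℝ² → ℝ be differentiable at (t₀, f(t₀)) with ∂g/∂u (t₀, f(t₀)) ≠ 0. Then the composed function t ↦ g(t, f(t)) is not differentiable at t₀. -/
/-!
Write `a`, `b` for the partial derivatives of `g` at `(t₀, f t₀)` and `d` for the derivative of
`t ↦ g (t, f t)`. Since `(t, f t) → (t₀, f t₀)`, comparing the two linearizations of `g (t, f t)`
gives `b (f t - f t₀) = (d - a) (t - t₀) + o(|t - t₀| + |f t - f t₀|)`. As `b ≠ 0`, the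
`|f t - f t₀|` part of the error can be absorbed, so `f t - f t₀ = O(t - t₀)`, the error is
`o(t - t₀)`, and `f` would have derivative `(d - a) / b` at `t₀`.
-/

open Asymptotics Filter Topology

section Absorption

variable {α E F : Type*} [NormedAddCommGroup E] [NormedAddCommGroup F] {l : Filter α}

theorem Asymptotics.IsLittleO.isBigO_of_sub_isLittleO_prod {x : α → E} {y z : α → F}
    (hz : z =O[l] x) (hyz : (fun t => y t - z t) =o[l] fun t => (x t, y t)) : y =O[l] x := by
  have hsmall : (fun t => ((0 : E), y t - z t)) =o[l] fun t => (x t, y t) :=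
    ((isBigO_zero _ _).prod_left (isBigO_refl _ _)).trans_isLittleO hyz
  have hpair : (fun t => (x t, y t)) =O[l] fun t => (x t, z t) := by
    simpa using hsmall.right_isBigO_sub
  exact isBigO_snd_prod.trans (hpair.trans ((isBigO_refl x l).prod_left hz))

end Absorption

section ImplicitDifferentiability

variable {𝕜 E F G : Type*} [NontriviallyNormedField 𝕜]
  [NormedAddCommGroup E] [NormedSpace 𝕜 E] [NormedAddCommGroup F] [NormedSpace 𝕜 F]
  [NormedAddCommGroup G] [NormedSpace 𝕜 G]

theorem HasFDerivAt.of_comp_prodMk {f : E → F} {g : E × F → G} {x₀ : E}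
    {L : E × F →L[𝕜] G} {B : F ≃L[𝕜] G} {h' : E →L[𝕜] G}
    (hf : ContinuousAt f x₀) (hg : HasFDerivAt g L (x₀, f x₀)) (hB : ∀ y, L (0, y) = B y)
    (hh : HasFDerivAt (fun x => g (x, f x)) h' x₀) :
    HasFDerivAt f ((B.symm : G →L[𝕜] F).comp (h' - L.comp (.inl 𝕜 E F))) x₀ := by
  set A : E →L[𝕜] F := (B.symm : G →L[𝕜] F).comp (h' - L.comp (.inl 𝕜 E F))
  set Δ : E → E × F := fun x => (x - x₀, f x - f x₀)
  have hgraph : Tendsto (fun x => (x, f x)) (𝓝 x₀) (𝓝 (x₀, f x₀)) :=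
    continuousAt_id.prodMk hf
  have hg_along : (fun x => g (x, f x) - g (x₀, f x₀) - L (Δ x)) =o[𝓝 x₀] Δ := by
    simpa [Δ, Function.comp_def, ← map_sub] using hg.isLittleO.comp_tendsto hgraph
  have hh_along : (fun x => g (x, f x) - g (x₀, f x₀) - h' (x - x₀)) =o[𝓝 x₀] Δ :=
    hh.isLittleO.trans_isBigO (isBigO_fst_prod (g' := fun x => f x - f x₀))
  have hB_Δ : (fun x => B (f x - f x₀) - (h' - L.comp (.inl 𝕜 E F)) (x - x₀)) =o[𝓝 x₀] Δ := by
    refine (hh_along.sub hg_along).congr_left fun x => ?_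
    have hL : L (Δ x) = L (x - x₀, 0) + B (f x - f x₀) := by
      rw [← hB, ← map_add, Prod.mk_add_mk, add_zero, zero_add]
    simp only [hL, sub_apply, ContinuousLinearMap.comp_apply, ContinuousLinearMap.inl_apply]
    abel
  have hf_Δ : (fun x => f x - f x₀ - A (x - x₀)) =o[𝓝 x₀] Δ := by
    refine ((B.symm : G →L[𝕜] F).isBigO_comp _ _).trans_isLittleO hB_Δ |>.congr_left fun x => ?_
    simp [A]
  have hΔ_isBigO : Δ =O[𝓝 x₀] fun x => x - x₀ :=
    (isBigO_refl _ _).prod_left (hf_Δ.isBigO_of_sub_isLittleO_prod (A.isBigO_comp _ _))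
  exact .of_isLittleO (hf_Δ.trans_isBigO hΔ_isBigO)

end ImplicitDifferentiability

theorem stmt0 (f : ℝ → ℝ) (g : ℝ × ℝ → ℝ) (t₀ : ℝ)
    (hf_cont : ContinuousAt f t₀)
    (hf_ndiff : ¬ DifferentiableAt ℝ f t₀)
    (hg : DifferentiableAt ℝ g (t₀, f t₀))
    (hgu : fderiv ℝ g (t₀, f t₀) (0, 1) ≠ 0) :
    ¬ DifferentiableAt ℝ (fun t => g (t, f t)) t₀ := by
  intro hh
  let B := ContinuousLinearEquiv.unitsEquivAut ℝ (Units.mk0 _ hgu)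
  have hB : ∀ y, fderiv ℝ g (t₀, f t₀) (0, y) = B y := fun y => by
    simpa [B] using (fderiv ℝ g (t₀, f t₀)).map_smul y (0, 1)
  exact hf_ndiff (hg.hasFDerivAt.of_comp_prodMk hf_cont hB hh.hasFDerivAt).differentiableAt
end

section
/- For x = (x₁, x₂) ∈ ℝ² with x₂ ≠ 0, define the single-layer potential over the segment [0,1]×{0}: f(x) = (1/(2π)) ∫₀¹ log‖x − (t,0)‖ dt. Then for a fixed x₁ ∈ (0,1), the one-sided normal derivatives of s ↦ f(x₁, s) at s = 0 satisfy ∂f/∂n⁺ − ∂f/∂n⁻ = 1, where n = (0,1); i.e., the single-layer potential with unit density has a unit jump of its normal derivative across the segment. -/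
/-!
The integral has an elementary closed form: for `s ≠ 0` an antiderivative in `t` of
`log √((c - t)² + s²)` is `(t - c)/2 · log((t - c)² + s²) - t + s · arctan((t - c)/s)`, and for
`s = 0` the integral reduces to `∫ log`. The logarithmic terms of the closed form are even and
smooth in `s`, while each term `s · arctan(k/s)` with `k > 0` has one-sided derivatives `± π/2`
at `0`. Hence the potential has right derivative `π/(2π) = 1/2` at `0`, and by evenness in `s`
left derivative `-1/2`.
-/

open Real MeasureTheory Set Filter Topology

theorem integral_log_abs_sub (c : ℝ) :
    ∫ t in (0 : ℝ)..1, log |c - t| = c * log c + (1 - c) * log (1 - c) - 1 := by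
  simp only [log_abs, intervalIntegral.integral_comp_sub_left log c, integral_log, sub_zero]
  rw [← log_neg_eq_log (c - 1), neg_sub]
  ring

theorem hasDerivAt_antideriv_log_sqrt_sq_add_sq (c s t : ℝ) (h : (t - c) ^ 2 + s ^ 2 ≠ 0) :
    HasDerivAt (fun t => (t - c) / 2 * log ((t - c) ^ 2 + s ^ 2) - t + s * arctan ((t - c) / s))
      (log √((c - t) ^ 2 + s ^ 2)) t := by
  have hsq : HasDerivAt (fun t => (t - c) ^ 2 + s ^ 2) (2 * (t - c)) t := by
    simpa using (((hasDerivAt_id' t).sub_const c).pow 2).add_const (s ^ 2)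
  have hlin : HasDerivAt (fun t => (t - c) / 2) (1 / 2) t :=
    ((hasDerivAt_id' t).sub_const c).div_const 2
  have harctan := (((hasDerivAt_id' t).sub_const c).div_const s).arctan.const_mul s
  refine ((hlin.mul (hsq.log h)).sub (hasDerivAt_id' t) |>.add harctan).congr_deriv ?_
  rw [show (c - t) ^ 2 = (t - c) ^ 2 by ring, log_sqrt (by positivity)]
  rcases eq_or_ne s 0 with rfl | hs
  · field_simp
    simp
  · field_simp
    ring

-- At `s = 0` the `arctan` terms vanish through the convention `k / 0 = 0`.
theorem integral_log_sqrt_sq_add_sq (c s : ℝ) :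
    ∫ t in (0 : ℝ)..1, log √((c - t) ^ 2 + s ^ 2) =
      (1 - c) / 2 * log ((1 - c) ^ 2 + s ^ 2) + c / 2 * log (c ^ 2 + s ^ 2) - 1
        + s * arctan ((1 - c) / s) + s * arctan (c / s) := by
  rcases eq_or_ne s 0 with rfl | hs
  · simp only [ne_eq, OfNat.ofNat_ne_zero, not_false_eq_true, zero_pow, add_zero, sqrt_sq_eq_abs,
      integral_log_abs_sub, log_pow, div_zero, arctan_zero, mul_zero]
    push_cast
    ring
  · have hpos : ∀ t, 0 < (t - c) ^ 2 + s ^ 2 := fun t => by positivity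
    have hint : IntervalIntegrable (fun t => log √((c - t) ^ 2 + s ^ 2)) volume 0 1 :=
      (Continuous.log (by fun_prop) fun t => (sqrt_pos.2 (by positivity)).ne').intervalIntegrable _ _
    rw [intervalIntegral.integral_eq_sub_of_hasDerivAt
      (fun t _ => hasDerivAt_antideriv_log_sqrt_sq_add_sq c s t (hpos t).ne') hint]
    simp only [zero_sub, neg_div, arctan_neg, neg_sq]
    ring

theorem hasDerivWithinAt_mul_arctan_div_Ici {k : ℝ} (hk : 0 < k) :
    HasDerivWithinAt (fun s => s * arctan (k / s)) (π / 2) (Ici 0) 0 := by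
  rw [← hasDerivWithinAt_Ioi_iff_Ici, hasDerivWithinAt_iff_tendsto_slope' self_notMem_Ioi]
  have hslope : (fun s => arctan (k / s)) =ᶠ[𝓝[>] 0] slope (fun s => s * arctan (k / s)) 0 := by
    filter_upwards [self_mem_nhdsWithin] with s (hs : 0 < s)
    simp [slope_def_field, hs.ne']
  refine Tendsto.congr' hslope ?_
  exact (tendsto_arctan_atTop.mono_right nhdsWithin_le_nhds).comp
    (tendsto_inv_nhdsGT_zero.const_mul_atTop hk)

theorem hasDerivAt_log_sq_add_sq_zero {k : ℝ} (hk : k ≠ 0) :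
    HasDerivAt (fun s => log (k ^ 2 + s ^ 2)) 0 0 := by
  simpa using (((hasDerivAt_id (0 : ℝ)).pow 2).const_add (k ^ 2)).log (by simp [hk])

theorem HasDerivWithinAt.Iic_of_even {E : Type*} [NormedAddCommGroup E] [NormedSpace ℝ E]
    {f : ℝ → E} {a : E} (heven : ∀ s, f (-s) = f s) (h : HasDerivWithinAt f a (Ici 0) 0) :
    HasDerivWithinAt f (-a) (Iic 0) 0 := by
  have hneg : HasDerivWithinAt (fun s : ℝ => -s) (-1) (Iic 0) 0 :=
    (hasDerivAt_neg 0).hasDerivWithinAt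
  have h' : HasDerivWithinAt f a (Ici 0) (-0) := by rwa [neg_zero]
  have hcomp := h'.scomp 0 hneg fun x (hx : x ≤ 0) => neg_nonneg.2 hx
  rw [neg_one_smul] at hcomp
  exact hcomp.congr (fun s _ => (heven s).symm) (heven 0).symm

theorem hasDerivWithinAt_integral_log_sqrt_Ici {c : ℝ} (hc : c ∈ Ioo 0 1) :
    HasDerivWithinAt (fun s => ∫ t in (0 : ℝ)..1, log √((c - t) ^ 2 + s ^ 2)) π (Ici 0) 0 := by
  obtain ⟨hc₀, hc₁⟩ := hc
  have hc₁' : 0 < 1 - c := sub_pos.2 hc₁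
  simp_rw [integral_log_sqrt_sq_add_sq]
  have h := ((((hasDerivAt_log_sq_add_sq_zero hc₁'.ne').const_mul ((1 - c) / 2)).add
    ((hasDerivAt_log_sq_add_sq_zero hc₀.ne').const_mul (c / 2))).sub_const 1).hasDerivWithinAt
    |>.add (hasDerivWithinAt_mul_arctan_div_Ici hc₁') |>.add
    (hasDerivWithinAt_mul_arctan_div_Ici hc₀)
  exact h.congr_deriv (by ring)

/-- Unit jump of the normal derivative of the 2D single-layer potential with unit
density across the open segment `(0,1) × {0}`. -/
theorem stmt17 (x₁ : ℝ) (hx₁ : x₁ ∈ Set.Ioo (0 : ℝ) 1) :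
    ∃ a b : ℝ,
      HasDerivWithinAt
        (fun s : ℝ =>
          (1 / (2 * π)) * ∫ t in (0 : ℝ)..1, Real.log (Real.sqrt ((x₁ - t) ^ 2 + s ^ 2)))
        a (Set.Ici 0) 0 ∧
      HasDerivWithinAt
        (fun s : ℝ =>
          (1 / (2 * π)) * ∫ t in (0 : ℝ)..1, Real.log (Real.sqrt ((x₁ - t) ^ 2 + s ^ 2)))
        b (Set.Iic 0) 0 ∧
      a - b = 1 := by
  have hright := (hasDerivWithinAt_integral_log_sqrt_Ici hx₁).const_mul (1 / (2 * π))
  have hleft := hright.Iic_of_even fun s => by simp only [neg_sq]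
  refine ⟨_, _, hright, hleft, ?_⟩
  field_simp
  ring
end

section
/- Let g: ℝⁿ × ℝᵏ → ℝ be C¹ and f: ℝⁿ → ℝᵏ be continuous, and suppose that for every x in an open set U the function y ↦ g(y, f(y)) is differentiable at x while f is not differentiable at x. Then for each such x, the partial differential D₂g(x, f(x)) annihilates all jump directions of f; in particular if k = 1 and D₂g(x, f(x)) ≠ 0, then f must be differentiable at x (contrapositive of the propagation theorem in several variables). -/
/-!
At `p = (x, f x)` the map `Φ p = (p.1, g p)` has derivative `(v, w) ↦ (v, Dg (v, w))`, which has
a continuous left inverse as soon as `D₂g` does. Since `Φ (y, f y) = (y, g (y, f y))` is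
differentiable at `x` and `y ↦ (y, f y)` is continuous there, the easy half of the inverse
function theorem makes the graph map, and hence `f`, differentiable at `x`.
-/

open Function

variable {𝕜 E F G : Type*} [NontriviallyNormedField 𝕜]
  [NormedAddCommGroup E] [NormedSpace 𝕜 E] [NormedAddCommGroup F] [NormedSpace 𝕜 F]
  [NormedAddCommGroup G] [NormedSpace 𝕜 G]

namespace ContinuousLinearMap

theorem leftInverse_fst_prod {D : E × F →L[𝕜] G} {S : G →L[𝕜] F}
    (hS : LeftInverse S (D ∘L inr 𝕜 E F)) :
    LeftInverse ((fst 𝕜 E G).prod (S ∘L (snd 𝕜 E G - D ∘L inl 𝕜 E F ∘L fst 𝕜 E G)))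
      ((fst 𝕜 E F).prod D) := by
  rintro ⟨v, w⟩
  have hD : D (v, w) - D (v, 0) = D (0, w) := by rw [← map_sub]; simp
  simpa [← map_sub, hD] using hS w

end ContinuousLinearMap

theorem differentiableAt_of_differentiableAt_comp_graph {φ : E × F → G}
    {φ' : E × F →L[𝕜] G} {f : E → F} {x : E} {S : G →L[𝕜] F} (hφ : HasFDerivAt φ φ' (x, f x))
    (hS : LeftInverse S (φ' ∘L .inr 𝕜 E F)) (hf : ContinuousAt f x)
    (hcomp : DifferentiableAt 𝕜 (fun y => φ (y, f y)) x) :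
    DifferentiableAt 𝕜 f x := by
  have hgraph : ContinuousAt (fun y => (y, f y)) x := continuousAt_id.prodMk hf
  have hΦ : HasFDerivAt (fun p => (p.1, φ p))
      ((ContinuousLinearMap.fst 𝕜 E F).prod φ') (x, f x) :=
    hasFDerivAt_fst.prodMk hφ
  exact (hΦ.of_comp_of_leftInverse hgraph
    (differentiableAt_id.prodMk hcomp).hasFDerivAt .rfl
    (ContinuousLinearMap.leftInverse_fst_prod hS)).differentiableAt.snd

theorem stmt18 (n : ℕ) (g : (Fin n → ℝ) × ℝ → ℝ) (f : (Fin n → ℝ) → ℝ)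
    (hg : ContDiff ℝ 1 g) (hf : Continuous f) (x : Fin n → ℝ)
    (hgu : fderiv ℝ g (x, f x) (0, 1) ≠ 0)
    (hcomp : DifferentiableAt ℝ (fun y => g (y, f y)) x) :
    DifferentiableAt ℝ f x := by
  have hS : LeftInverse ((fderiv ℝ g (x, f x) (0, 1))⁻¹ • ContinuousLinearMap.id ℝ ℝ)
      (fderiv ℝ g (x, f x) ∘L .inr ℝ (Fin n → ℝ) ℝ) := by
    intro w
    have hw : ((0 : Fin n → ℝ), w) = w • ((0 : Fin n → ℝ), (1 : ℝ)) := by simp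
    simp only [smul_apply, ContinuousLinearMap.coe_comp, comp_apply,
      ContinuousLinearMap.inr_apply, hw, map_smul, ContinuousLinearMap.id_apply, smul_eq_mul]
    field_simp
  exact differentiableAt_of_differentiableAt_comp_graph
    (hg.differentiable one_ne_zero).differentiableAt.hasFDerivAt hS hf.continuousAt hcomp
end
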